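/- arXiv:2305.16297 — 6 statements merged into one kernel-verified Lean document; each statement's English description precedes it below -/
import Mathlib

section
/- Let p ∈ [0, 1] and let (B^t)_{t≥0} be a sequence of integer-valued random variables adapted to a filtration such that B^t ≤ B^{t−1} + 1 almost surely and P(B^t ≤ B^{t−1} | B^0, …, B^{t−1}) ≥ 1 − p for all t ≥ 1. Then for every t ≥ 1/p, with probability at least 1 − e^{−1}, it holds that B^t ≤ B^0 + e·p·t. -/
open MeasureTheory Finset

/-! The number `N` of up-steps among the first `t` steps dominates `B t - B 0`, because each step
rises by at most one, and `𝔼 N ≤ p t` since every step is an up-step with probability at most `p`.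
Markov's inequality then bounds `P(N > e p t)` by `1 / e`. -/

theorem sub_le_sum_ite_of_le_add_one {b : ℕ → ℤ} (hb : ∀ s, b (s + 1) ≤ b s + 1) (t : ℕ) :
    (b t : ℝ) - b 0 ≤ ∑ s ∈ range t, if b (s + 1) ≤ b s then 0 else 1 := by
  rw [← Finset.sum_range_sub (fun s => (b s : ℝ))]
  refine Finset.sum_le_sum fun s _ => ?_
  split_ifs with hs
  · simpa using (Int.cast_le (R := ℝ)).mpr hs
  · have := (Int.cast_le (R := ℝ)).mpr (hb s)
    push_cast at this
    linarith

section Probability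

variable {Ω : Type*} {m m0 : MeasurableSpace Ω} {μ : Measure Ω} [IsProbabilityMeasure μ]

theorem measureReal_compl_le_of_le_condExp_indicator (hm : m ≤ m0) {S : Set Ω}
    (hS : MeasurableSet S) {p : ℝ}
    (h : (fun _ => 1 - p) ≤ᵐ[μ] μ[S.indicator (fun _ => (1 : ℝ)) | m]) :
    μ.real Sᶜ ≤ p := by
  have : 1 - p ≤ μ.real S :=
    calc 1 - p = ∫ _, (1 - p) ∂μ := by simp
      _ ≤ ∫ ω, (μ[S.indicator (fun _ => (1 : ℝ)) | m]) ω ∂μ :=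
        integral_mono_ae (integrable_const _) integrable_condExp h
      _ = μ.real S := by
        rw [integral_condExp hm, integral_indicator_const _ hS, smul_eq_mul, mul_one]
  rw [probReal_compl_eq_one_sub hS]
  linarith

theorem one_sub_exp_neg_one_le_measureReal_le_exp_one_mul {f : Ω → ℝ} (hf0 : 0 ≤ f)
    (hfi : Integrable f μ) {a : ℝ} (ha : ∫ ω, f ω ∂μ ≤ a) :
    1 - Real.exp (-1) ≤ μ.real {ω | f ω ≤ Real.exp 1 * a} := by
  suffices h : μ.real {ω | f ω ≤ Real.exp 1 * a}ᶜ ≤ Real.exp (-1) by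
    have hmeas : NullMeasurableSet {ω | f ω ≤ Real.exp 1 * a} μ :=
      hfi.aemeasurable.nullMeasurable measurableSet_Iic
    rw [probReal_compl_eq_one_sub₀ hmeas] at h
    linarith
  have hint0 : 0 ≤ ∫ ω, f ω ∂μ := integral_nonneg hf0
  rcases (hint0.trans ha).eq_or_lt with rfl | ha0
  · have hf : f =ᵐ[μ] 0 := (integral_eq_zero_iff_of_nonneg hf0 hfi).mp (ha.antisymm hint0)
    have hnull : μ {ω | f ω ≤ Real.exp 1 * 0}ᶜ = 0 := ae_iff.mp <| by
      filter_upwards [hf] with ω hω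
      simp [hω]
    rw [measureReal_def, hnull, ENNReal.toReal_zero]
    positivity
  · have hmarkov := mul_meas_ge_le_integral_of_nonneg (.of_forall hf0) hfi (Real.exp 1 * a)
    calc μ.real {ω | f ω ≤ Real.exp 1 * a}ᶜ ≤ μ.real {ω | Real.exp 1 * a ≤ f ω} :=
          measureReal_mono fun ω (hω : ¬f ω ≤ _) => (not_le.mp hω).le
      _ ≤ Real.exp (-1) := by
          rw [Real.exp_neg, ← one_div, le_div_iff₀ (Real.exp_pos 1)]
          nlinarith [hmarkov, Real.exp_pos 1]

end Probability

theorem stmt_5_general {Ω : Type*} [m0 : MeasurableSpace Ω] (μ : Measure Ω) [IsProbabilityMeasure μ]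
    (p : ℝ)
    (B : ℕ → Ω → ℤ) (ℱ : Filtration ℕ m0)
    (hadapted : Adapted ℱ B)
    (hstep : ∀ t : ℕ, 1 ≤ t → ∀ᵐ ω ∂μ, B t ω ≤ B (t - 1) ω + 1)
    (hcond : ∀ t : ℕ, 1 ≤ t →
      (fun _ => (1 - p)) ≤ᵐ[μ]
        μ[({ω | B t ω ≤ B (t - 1) ω}).indicator (fun _ => (1 : ℝ)) | ℱ (t - 1)])
    (t : ℕ) :
    1 - Real.exp (-1) ≤
      (μ {ω | (B t ω : ℝ) ≤ (B 0 ω : ℝ) + Real.exp 1 * p * t}).toReal := by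
  set up : ℕ → Set Ω := fun s => {ω | B (s + 1) ω ≤ B s ω}ᶜ
  have hup : ∀ s, MeasurableSet (up s) := fun s =>
    (measurableSet_le ((hadapted _).mono (ℱ.le _) le_rfl)
      ((hadapted _).mono (ℱ.le _) le_rfl)).compl
  set N : Ω → ℝ := fun ω => ∑ s ∈ range t, (up s).indicator 1 ω
  have hNi : Integrable N μ :=
    integrable_finsetSum _ fun s _ => (integrable_const 1).indicator (hup s)
  have hN0 : 0 ≤ N := fun ω => Finset.sum_nonneg fun s _ => Set.indicator_nonneg (by simp) ω
  have hEN : ∫ ω, N ω ∂μ ≤ p * t := by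
    rw [integral_finsetSum _ fun s _ => (integrable_const 1).indicator (hup s)]
    refine (Finset.sum_le_sum fun s _ => ?_).trans_eq
      (by rw [sum_const, card_range, nsmul_eq_mul, mul_comm])
    rw [integral_indicator_one (hup s)]
    exact measureReal_compl_le_of_le_condExp_indicator (ℱ.le s) (hup s).of_compl
      (by simpa using hcond (s + 1) le_add_self)
  have hBN : ∀ᵐ ω ∂μ, (B t ω : ℝ) - B 0 ω ≤ N ω := by
    have hsteps : ∀ᵐ ω ∂μ, ∀ s, B (s + 1) ω ≤ B s ω + 1 :=
      ae_all_iff.mpr fun s => by simpa using hstep (s + 1) le_add_self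
    filter_upwards [hsteps] with ω hω
    refine (sub_le_sum_ite_of_le_add_one hω t).trans_eq (Finset.sum_congr rfl fun s _ => ?_)
    by_cases hs : B (s + 1) ω ≤ B s ω <;> simp [up, hs]
  calc 1 - Real.exp (-1) ≤ μ.real {ω | N ω ≤ Real.exp 1 * (p * t)} :=
        one_sub_exp_neg_one_le_measureReal_le_exp_one_mul hN0 hNi hEN
    _ ≤ _ := by
      refine ENNReal.toReal_mono (measure_ne_top _ _) (measure_mono_ae ?_)
      filter_upwards [hBN] with ω hω (hN : N ω ≤ _)
      show (B t ω : ℝ) ≤ _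
      linarith

theorem stmt_5 {Ω : Type*} [m0 : MeasurableSpace Ω] (μ : Measure Ω) [IsProbabilityMeasure μ]
    (p : ℝ) (hp0 : 0 ≤ p) (hp1 : p ≤ 1)
    (B : ℕ → Ω → ℤ) (ℱ : Filtration ℕ m0)
    (hadapted : Adapted ℱ B)
    (hstep : ∀ t : ℕ, 1 ≤ t → ∀ᵐ ω ∂μ, B t ω ≤ B (t - 1) ω + 1)
    (hcond : ∀ t : ℕ, 1 ≤ t →
      (fun _ => (1 - p)) ≤ᵐ[μ]
        μ[({ω | B t ω ≤ B (t - 1) ω}).indicator (fun _ => (1 : ℝ)) | ℱ (t - 1)])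
    (t : ℕ) (ht : 1 / p ≤ (t : ℝ)) :
    1 - Real.exp (-1) ≤
      (μ {ω | (B t ω : ℝ) ≤ (B 0 ω : ℝ) + Real.exp 1 * p * t}).toReal :=
  stmt_5_general (m0 := m0) μ p B ℱ hadapted hstep hcond t
end

section
/- Let f : ℝ^d → ℝ be μ-strongly convex with minimizer x* given by [x*]_j = λ·q^j (0 < q < 1, λ ≠ 0), interpreted in ℓ². Then for every x supported on the first k coordinates, f(x) − f(x*) ≥ (μ/2)·q^{2k}·‖x^0 − x*‖², where x^0 = 0. -/
open scoped ENNReal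

private lemma lp2_norm_sq (y : lp (fun _ : ℕ => ℝ) 2) :
    ‖y‖ ^ 2 = ∑' j, (y j) ^ 2 := by
  have hp : 0 < (2 : ℝ≥0∞).toReal := by norm_num
  have h := lp.norm_rpow_eq_tsum hp y
  have h2 : (2 : ℝ≥0∞).toReal = ((2 : ℕ) : ℝ) := by norm_num
  rw [h2] at h
  simp only [Real.rpow_natCast] at h
  rw [h]
  congr 1; funext j
  rw [Real.norm_eq_abs, sq_abs]

private lemma lp2_summable_sq (y : lp (fun _ : ℕ => ℝ) 2) :
    Summable (fun j => (y j) ^ 2) := by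
  have hp : 0 < (2 : ℝ≥0∞).toReal := by norm_num
  have h := (lp.memℓp y).summable hp
  have h2 : (2 : ℝ≥0∞).toReal = ((2 : ℕ) : ℝ) := by norm_num
  rw [h2] at h
  simp only [Real.rpow_natCast] at h
  convert h using 2 with j
  rw [Real.norm_eq_abs, sq_abs]

theorem stmt_8 (μr q lam : ℝ) (hμ : 0 < μr) (hq0 : 0 < q) (hq1 : q < 1) (hlam : lam ≠ 0)
    (f : lp (fun _ : ℕ => ℝ) 2 → ℝ) (xstar : lp (fun _ : ℕ => ℝ) 2)
    (hxstar0 : xstar 0 = 0)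
    (hxstar : ∀ j : ℕ, 1 ≤ j → xstar j = lam * q ^ j)
    (hsc : ∀ x, f x - f xstar ≥ μr / 2 * ‖x - xstar‖ ^ 2)
    (k : ℕ) (x : lp (fun _ : ℕ => ℝ) 2) (hx0 : x 0 = 0) (hx : ∀ j : ℕ, k < j → x j = 0) :
    f x - f xstar ≥ μr / 2 * q ^ (2 * k) * ‖(0 : lp (fun _ : ℕ => ℝ) 2) - xstar‖ ^ 2 := by
  set r : ℝ := q ^ 2 with hr
  have hr0 : 0 < r := by positivity
  have hr1 : r < 1 := by nlinarith
  have hrs : 0 < 1 - r := by linarith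
  have ha : ∀ j : ℕ, 1 ≤ j → (xstar j) ^ 2 = lam ^ 2 * r ^ j := by
    intro j h
    rw [hxstar j h, hr, mul_pow, ← pow_mul, ← pow_mul, Nat.mul_comm]
  have hxs_sq : ‖xstar‖ ^ 2 = lam ^ 2 * r * (1 - r)⁻¹ := by
    rw [lp2_norm_sq]
    rw [Summable.tsum_eq_zero_add (lp2_summable_sq xstar)]
    have h0 : (xstar 0) ^ 2 = 0 := by simp [hxstar0]
    rw [h0, zero_add]
    have he : ∀ j : ℕ, (xstar (j + 1)) ^ 2 = (lam ^ 2 * r) * r ^ j := by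
      intro j; rw [ha (j + 1) (by omega)]; ring
    rw [tsum_congr he, tsum_mul_left, tsum_geometric_of_lt_one hr0.le hr1]
  set b : ℕ → ℝ := fun j => if j ≤ k then 0 else lam ^ 2 * r ^ j with hb
  have hble : ∀ j, b j ≤ ((x - xstar) j) ^ 2 := by
    intro j
    by_cases h : j ≤ k
    · simp only [hb, if_pos h]; positivity
    · push_neg at h
      have hxj : x j = 0 := hx j h
      have hsub : (x - xstar) j = x j - xstar j := by
        rw [lp.coeFn_sub]; rfl
      simp only [hb, if_neg (not_le.mpr h)]
      rw [hsub, hxj, zero_sub, neg_sq, ha j (by omega)]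
  have hbnn : ∀ j, 0 ≤ b j := by
    intro j
    by_cases h : j ≤ k
    · simp only [hb, h, ite_true]; exact le_rfl
    · simp only [hb, h, ite_false]; positivity
  have hbsummable : Summable b := by
    apply Summable.of_nonneg_of_le hbnn (fun j => ?_)
      ((summable_geometric_of_lt_one hr0.le hr1).mul_left (lam ^ 2))
    by_cases h : j ≤ k
    · simp only [hb, h, ite_true]; positivity
    · simp only [hb, h, ite_false]; exact le_rfl
  have hbsum : ∑' j, b j = lam ^ 2 * r ^ (k + 1) * (1 - r)⁻¹ := by
    rw [← Summable.sum_add_tsum_nat_add (k + 1) hbsummable]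
    have h1 : ∑ i ∈ Finset.range (k + 1), b i = 0 := by
      apply Finset.sum_eq_zero
      intro i hi
      have hik := Finset.mem_range.mp hi
      simp only [hb]
      rw [if_pos (by omega : i ≤ k)]
    have h2 : ∀ i : ℕ, b (i + (k + 1)) = (lam ^ 2 * r ^ (k + 1)) * r ^ i := by
      intro i
      simp only [hb, if_neg (by omega : ¬ i + (k + 1) ≤ k)]
      rw [pow_add]; ring
    rw [h1, zero_add, tsum_congr h2, tsum_mul_left,
      tsum_geometric_of_lt_one hr0.le hr1]
  have hlow : q ^ (2 * k) * ‖xstar‖ ^ 2 ≤ ‖x - xstar‖ ^ 2 := by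
    have h1 : q ^ (2 * k) * ‖xstar‖ ^ 2 = ∑' j, b j := by
      rw [hbsum, hxs_sq]
      have : q ^ (2 * k) = r ^ k := by rw [hr, ← pow_mul, Nat.mul_comm]
      rw [this, pow_succ]; ring
    rw [h1, lp2_norm_sq]
    exact Summable.tsum_le_tsum hble hbsummable (lp2_summable_sq _)
  have hnorm0 : ‖(0 : lp (fun _ : ℕ => ℝ) 2) - xstar‖ = ‖xstar‖ := by
    rw [zero_sub, norm_neg]
  rw [hnorm0]
  calc μr / 2 * q ^ (2 * k) * ‖xstar‖ ^ 2
      = μr / 2 * (q ^ (2 * k) * ‖xstar‖ ^ 2) := by ring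
    _ ≤ μr / 2 * ‖x - xstar‖ ^ 2 := by
        apply mul_le_mul_of_nonneg_left hlow (by positivity)
    _ ≤ f x - f xstar := hsc x
end

section
/- Let L > 0, λ ≠ 0, n ≥ 1, d ≥ 1, and define f(x) = (L/(4n))·(xᵀMx − 2λ[x]_1) on ℝ^d, where M is the d×d tridiagonal matrix with diagonal 2 and off-diagonals −1. Then the minimizer is x* with [x*]_j = λ·(1 − j/(d+1)) for 1 ≤ j ≤ d, and min_x f(x) = −λ²·L·d/(4n(d+1)). -/
open Matrix

lemma aux_sq_sum (Y : ℕ → ℝ) (h0 : Y 0 = 0) :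
    ∀ m, ∑ i ∈ Finset.range m, Y (i+1) * (2*Y (i+1) - Y i - Y (i+2))
      = (∑ i ∈ Finset.range m, (Y (i+1) - Y i)^2) + Y m * Y m - Y m * Y (m+1) := by
  intro m
  induction m with
  | zero => simp [h0]
  | succ m ih =>
    rw [Finset.sum_range_succ, ih, Finset.sum_range_succ]
    ring

lemma tri_mulVec (d : ℕ) (M : Matrix (Fin d) (Fin d) ℝ)
    (hM : ∀ i j : Fin d,
      M i j = if i = j then 2 else if |(i : ℤ) - (j : ℤ)| = 1 then -1 else 0)
    (x : Fin d → ℝ) (i : Fin d) :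
    M.mulVec x i = 2 * x i
      - (if h : 0 < (i:ℕ) then x ⟨(i:ℕ)-1, Nat.lt_of_le_of_lt (Nat.sub_le _ _) i.isLt⟩ else 0)
      - (if h : (i:ℕ)+1 < d then x ⟨(i:ℕ)+1, h⟩ else 0) := by
  have hsplit : ∀ j : Fin d, M i j * x j =
      (if i = j then 2 * x j else 0) + (if (j:ℕ)+1 = (i:ℕ) then -x j else 0)
        + (if (i:ℕ)+1 = (j:ℕ) then -x j else 0) := by
    intro j
    rw [hM]
    simp only [Fin.ext_iff, abs_eq (by norm_num : (0:ℤ) ≤ 1)]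
    have hi := i.isLt; have hj := j.isLt
    split_ifs <;> first | ring1 | (exfalso; omega)
  have h1 : ∑ j : Fin d, (if i = j then 2 * x j else 0) = 2 * x i := by
    simp [Finset.sum_ite_eq]
  have h2 : ∑ j : Fin d, (if (j:ℕ)+1 = (i:ℕ) then -x j else 0)
      = -(if h : 0 < (i:ℕ) then x ⟨(i:ℕ)-1, Nat.lt_of_le_of_lt (Nat.sub_le _ _) i.isLt⟩ else 0) := by
    by_cases h : 0 < (i:ℕ)
    · rw [dif_pos h]
      rw [Finset.sum_eq_single (⟨(i:ℕ)-1, Nat.lt_of_le_of_lt (Nat.sub_le _ _) i.isLt⟩ : Fin d)]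
      · rw [if_pos (show (i:ℕ)-1+1 = (i:ℕ) by omega)]
      · intro b _ hb
        rw [if_neg]
        intro hc
        exact hb (Fin.ext (show (b:ℕ) = (i:ℕ)-1 by omega))
      · intro h'; exact absurd (Finset.mem_univ _) h'
    · rw [dif_neg h]
      rw [neg_zero]
      apply Finset.sum_eq_zero
      intro j _
      rw [if_neg (by omega)]
  have h3 : ∑ j : Fin d, (if (i:ℕ)+1 = (j:ℕ) then -x j else 0)
      = -(if h : (i:ℕ)+1 < d then x ⟨(i:ℕ)+1, h⟩ else 0) := by
    by_cases h : (i:ℕ)+1 < d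
    · rw [dif_pos h]
      rw [Finset.sum_eq_single (⟨(i:ℕ)+1, h⟩ : Fin d)]
      · rw [if_pos rfl]
      · intro b _ hb
        rw [if_neg]
        intro hc
        exact hb (Fin.ext (show (b:ℕ) = (i:ℕ)+1 by omega))
      · intro h'; exact absurd (Finset.mem_univ _) h'
    · rw [dif_neg h]
      rw [neg_zero]
      apply Finset.sum_eq_zero
      intro j _
      have := j.isLt
      rw [if_neg (by omega)]
  calc M.mulVec x i = ∑ j : Fin d, M i j * x j := rfl
    _ = ∑ j : Fin d, ((if i = j then 2 * x j else 0) + (if (j:ℕ)+1 = (i:ℕ) then -x j else 0)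
        + (if (i:ℕ)+1 = (j:ℕ) then -x j else 0)) := Finset.sum_congr rfl (fun j _ => hsplit j)
    _ = _ := by rw [Finset.sum_add_distrib, Finset.sum_add_distrib, h1, h2, h3]; ring

lemma quad_nonneg (d : ℕ) (M : Matrix (Fin d) (Fin d) ℝ)
    (hM : ∀ i j : Fin d,
      M i j = if i = j then 2 else if |(i : ℤ) - (j : ℤ)| = 1 then -1 else 0)
    (x : Fin d → ℝ) : 0 ≤ x ⬝ᵥ M.mulVec x := by
  set X : ℕ → ℝ := fun k => if h : k < d then x ⟨k, h⟩ else 0 with hX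
  set Y : ℕ → ℝ := fun k => match k with | 0 => 0 | k+1 => X k with hY
  have hYX : ∀ k, Y (k+1) = X k := fun k => rfl
  have key : x ⬝ᵥ M.mulVec x
      = ∑ i ∈ Finset.range d, Y (i+1) * (2*Y (i+1) - Y i - Y (i+2)) := by
    rw [dotProduct]
    rw [← Fin.sum_univ_eq_sum_range (fun i => Y (i+1) * (2*Y (i+1) - Y i - Y (i+2))) d]
    apply Finset.sum_congr rfl
    intro i _
    rw [tri_mulVec d M hM x i]
    have e1 : x i = X (i:ℕ) := by simp [hX, i.isLt]
    have e2 : (if h : 0 < (i:ℕ) then x ⟨(i:ℕ)-1, Nat.lt_of_le_of_lt (Nat.sub_le _ _) i.isLt⟩ else 0)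
        = Y (i:ℕ) := by
      by_cases h : 0 < (i:ℕ)
      · rw [dif_pos h]
        obtain ⟨k, hk⟩ : ∃ k, (i:ℕ) = k + 1 := ⟨(i:ℕ)-1, by omega⟩
        have hx : x ⟨(i:ℕ)-1, Nat.lt_of_le_of_lt (Nat.sub_le _ _) i.isLt⟩ = X ((i:ℕ)-1) := by
          simp only [hX]
          rw [dif_pos (Nat.lt_of_le_of_lt (Nat.sub_le _ _) i.isLt)]
        rw [hx, hk]
        simp [hYX]
      · rw [dif_neg h]
        have h0 : (i:ℕ) = 0 := by omega
        rw [h0]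
    have e3 : (if h : (i:ℕ)+1 < d then x ⟨(i:ℕ)+1, h⟩ else 0) = X ((i:ℕ)+1) := by
      simp [hX]
    rw [e1, e2, e3, hYX, hYX]
  rw [key, aux_sq_sum Y rfl d]
  have hYd1 : Y (d+1) = 0 := by simp [hYX, hX]
  rw [hYd1, mul_zero, sub_zero]
  have := Finset.sum_nonneg (fun i (_ : i ∈ Finset.range d) => sq_nonneg (Y (i+1) - Y i))
  nlinarith [sq_nonneg (Y d)]


theorem stmt_10 (d n : ℕ) (hd : 0 < d) (hn : 1 ≤ n) (L lam : ℝ) (hL : 0 < L) (hlam : lam ≠ 0)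
    (M : Matrix (Fin d) (Fin d) ℝ)
    (hM : ∀ i j : Fin d,
      M i j = if i = j then 2 else if |(i : ℤ) - (j : ℤ)| = 1 then -1 else 0)
    (f : (Fin d → ℝ) → ℝ)
    (hf : ∀ x, f x = L / (4 * n) * (x ⬝ᵥ M.mulVec x - 2 * lam * x ⟨0, hd⟩))
    (xstar : Fin d → ℝ)
    (hxstar : ∀ j : Fin d, xstar j = lam * (1 - ((j : ℝ) + 1) / (d + 1))) :
    (∀ x, f xstar ≤ f x) ∧ f xstar = -(lam ^ 2) * L * d / (4 * n * (d + 1)) := by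
  have hn' : (0:ℝ) < (n:ℝ) := by exact_mod_cast Nat.lt_of_lt_of_le Nat.zero_lt_one hn
  have hd1 : ((d:ℝ)+1) ≠ 0 := by positivity
  -- M xstar = lam * e_0
  have hMx : ∀ i : Fin d, M.mulVec xstar i = if i = ⟨0, hd⟩ then lam else 0 := by
    intro i
    rw [tri_mulVec d M hM xstar i]
    by_cases h0 : (i:ℕ) = 0
    · rw [if_pos (Fin.ext h0), dif_neg (by omega)]
      by_cases h1 : (i:ℕ)+1 < d
      · rw [dif_pos h1, hxstar, hxstar]
        simp only [Fin.val_mk, h0]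
        push_cast
        field_simp
        ring
      · have hd' : d = 1 := by have := i.isLt; omega
        have hdr : (d:ℝ) = 1 := by rw [hd']; norm_num
        rw [dif_neg h1, hxstar]
        simp only [h0, hdr]
        push_cast
        norm_num
        ring
    · rw [if_neg (fun hc => h0 (congrArg Fin.val hc)), dif_pos (by omega : 0 < (i:ℕ))]
      have hcast : (((i:ℕ)-1 : ℕ) : ℝ) = ((i:ℕ):ℝ) - 1 := by
        have h1 : 1 ≤ (i:ℕ) := by omega
        push_cast [Nat.cast_sub h1]
        ring
      by_cases h1 : (i:ℕ)+1 < d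
      · rw [dif_pos h1, hxstar, hxstar, hxstar]
        simp only [Fin.val_mk, hcast]
        push_cast
        field_simp
        ring
      · have hid : ((i:ℕ):ℝ) + 1 = (d:ℝ) := by
          have := i.isLt
          exact_mod_cast congrArg (Nat.cast : ℕ → ℝ) (by omega : (i:ℕ)+1 = d)
        rw [dif_neg h1, hxstar, hxstar]
        simp only [Fin.val_mk, hcast]
        rw [← hid]
        push_cast
        field_simp
        ring
  have hsymmT : Mᵀ = M := by
    ext i j
    rw [transpose_apply, hM, hM]
    by_cases h : i = j
    · simp [h]
    · rw [if_neg h, if_neg (Ne.symm h), abs_sub_comm]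
  have hbil : ∀ u v : Fin d → ℝ, u ⬝ᵥ M.mulVec v = v ⬝ᵥ M.mulVec u := by
    intro u v
    rw [Matrix.dotProduct_mulVec, ← Matrix.mulVec_transpose, hsymmT, dotProduct_comm]
  have hdot : ∀ u : Fin d → ℝ, u ⬝ᵥ M.mulVec xstar = lam * u ⟨0, hd⟩ := by
    intro u
    rw [dotProduct]
    calc ∑ j : Fin d, u j * (M.mulVec xstar j)
        = ∑ j : Fin d, (if j = ⟨0,hd⟩ then u j * lam else 0) := by
          apply Finset.sum_congr rfl
          intro j _
          rw [hMx j, mul_ite, mul_zero]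
      _ = lam * u ⟨0,hd⟩ := by rw [Finset.sum_ite_eq']; simp [mul_comm]
  have hexp : ∀ x, f x = L/(4*n) * ((x - xstar) ⬝ᵥ M.mulVec (x - xstar)) + f xstar := by
    intro x
    rw [hf x, hf xstar]
    have e : (x - xstar) ⬝ᵥ M.mulVec (x - xstar)
        = x ⬝ᵥ M.mulVec x - 2*(lam * x ⟨0,hd⟩) + lam * xstar ⟨0,hd⟩ := by
      rw [Matrix.mulVec_sub, sub_dotProduct, dotProduct_sub, dotProduct_sub,
        hbil xstar x, hdot x, hdot xstar]
      ring
    rw [e, hdot xstar]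
    ring
  constructor
  · intro x
    rw [hexp x]
    have hq := quad_nonneg d M hM (x - xstar)
    have hc : 0 < L/(4*n) := div_pos hL (by positivity)
    nlinarith [mul_nonneg hc.le hq]
  · rw [hf xstar]
    have h1 := hdot xstar
    rw [dotProduct] at h1 ⊢
    rw [h1, hxstar ⟨0,hd⟩]
    simp only [Fin.val_mk, Nat.cast_zero]
    have hnn : (n:ℝ) ≠ 0 := ne_of_gt hn'
    field_simp
    ring
end

section
/- With f as above, for every 0 ≤ k ≤ d, the minimum of f over vectors supported on the first k coordinates equals −λ²·L·k/(4n(k+1)), i.e., min{ f(x) : [x]_j = 0 for all j > k } = −λ²Lk/(4n(k+1)). -/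
/-!
Extend `x` by zeros on both sides to a sequence `p`; then `xᵀMx = ∑ (p (m+1) - p m)²`. For `x`
supported on the first `k` coordinates the `k + 1` differences `a m = p (m+1) - p m` sum to zero
and `a 0 = x 0`, so completing the square on the hyperplane `∑ a = 0` gives
`xᵀMx - 2λ x 0 = ∑ (a m - λ (δ m 0 - 1/(k+1)))² - λ² k/(k+1)`; the square vanishes at
`x j = λ (k - j)/(k+1)`.
-/
open Matrix Finset

theorem sum_sq_sub_two_mul_eq {ι : Type*} [DecidableEq ι] (s : Finset ι) (a : ι → ℝ)
    (ha : ∑ i ∈ s, a i = 0) {i₀ : ι} (hi₀ : i₀ ∈ s) (lam : ℝ) :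
    ∑ i ∈ s, a i ^ 2 - 2 * lam * a i₀ =
      ∑ i ∈ s, (a i - lam * ((if i = i₀ then 1 else 0) - 1 / #s)) ^ 2
        - lam ^ 2 * (#s - 1) / #s := by
  have hs : (#s : ℝ) ≠ 0 := by exact_mod_cast (Finset.card_pos.2 ⟨i₀, hi₀⟩).ne'
  have key : ∀ i, (a i - lam * ((if i = i₀ then 1 else 0) - 1 / #s)) ^ 2 =
      a i ^ 2 + 2 * lam / #s * a i + lam ^ 2 / #s ^ 2
        + (if i = i₀ then lam ^ 2 * (1 - 2 / #s) - 2 * lam * a i₀ else 0) := by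
    intro i; split_ifs with h <;> [subst h; skip] <;> ring
  simp only [key, sum_add_distrib, ← mul_sum, ha, sum_ite_eq', if_pos hi₀, sum_const, nsmul_eq_mul]
  field_simp
  ring

def padded {d : ℕ} (x : Fin d → ℝ) : ℕ → ℝ
  | 0 => 0
  | j + 1 => if h : j < d then x ⟨j, h⟩ else 0

@[simp] theorem padded_zero {d : ℕ} (x : Fin d → ℝ) : padded x 0 = 0 := rfl

@[simp] theorem padded_succ_val {d : ℕ} (x : Fin d → ℝ) (j : Fin d) :
    padded x (j + 1) = x j := by
  simp [padded]

theorem padded_eq_zero_of_lt {d k : ℕ} {x : Fin d → ℝ} (hx : ∀ j : Fin d, k ≤ (j : ℕ) → x j = 0)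
    {m : ℕ} (hm : k < m) : padded x m = 0 := by
  obtain ⟨j, rfl⟩ := Nat.exists_eq_add_of_lt (Nat.zero_lt_of_lt hm)
  simp only [zero_add, padded]
  split_ifs with h
  · exact hx _ (by simp; omega)
  · rfl

theorem sum_fin_ite_eq_padded {d : ℕ} (x : Fin d → ℝ) (a : ℕ) :
    ∑ j : Fin d, (if (j : ℕ) = a then x j else 0) = padded x (a + 1) := by
  simp_rw [← padded_succ_val x]
  rw [Fin.sum_univ_eq_sum_range (fun j => if j = a then padded x (j + 1) else 0), sum_ite_eq']
  split_ifs with h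
  · rfl
  · simp [padded, mem_range.not.1 h]

theorem sum_range_sq_sub_eq {p : ℕ → ℝ} (d : ℕ) (h0 : p 0 = 0) (hd : p (d + 1) = 0) :
    ∑ m ∈ range (d + 1), (p (m + 1) - p m) ^ 2 =
      ∑ i ∈ range d, p (i + 1) * (2 * p (i + 1) - p i - p (i + 2)) := by
  have hright : ∑ m ∈ range (d + 1), (p (m + 1) - p m) * p (m + 1) =
      ∑ i ∈ range d, (p (i + 1) - p i) * p (i + 1) := by
    rw [sum_range_succ, hd, mul_zero, add_zero]
  have hleft : ∑ m ∈ range (d + 1), (p (m + 1) - p m) * p m =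
      ∑ i ∈ range d, (p (i + 2) - p (i + 1)) * p (i + 1) := by
    rw [sum_range_succ', h0, mul_zero, add_zero]
  calc ∑ m ∈ range (d + 1), (p (m + 1) - p m) ^ 2
      = ∑ m ∈ range (d + 1), (p (m + 1) - p m) * p (m + 1)
          - ∑ m ∈ range (d + 1), (p (m + 1) - p m) * p m := by
        rw [← sum_sub_distrib]; exact sum_congr rfl fun _ _ => by ring
    _ = _ := by
        rw [hright, hleft, ← sum_sub_distrib]; exact sum_congr rfl fun _ _ => by ring

section Tridiagonal

variable {d : ℕ} {M : Matrix (Fin d) (Fin d) ℝ}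

theorem mulVec_apply_of_tridiagonal
    (hM : ∀ i j : Fin d,
      M i j = if i = j then 2 else if |(i : ℤ) - (j : ℤ)| = 1 then -1 else 0)
    (x : Fin d → ℝ) (i : Fin d) :
    (M *ᵥ x) i = 2 * padded x (i + 1) - padded x i - padded x (i + 2) := by
  have hM' : ∀ j : Fin d, M i j * x j = 2 * (if (j : ℕ) = i then x j else 0)
      - (if (j : ℕ) + 1 = i then x j else 0) - (if (j : ℕ) = i + 1 then x j else 0) := by
    intro j
    simp only [hM, abs_eq zero_le_one, Fin.ext_iff]
    split_ifs <;> first | omega | ring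
  have hprev : ∑ j : Fin d, (if (j : ℕ) + 1 = i then x j else 0) = padded x i := by
    rcases Nat.eq_zero_or_eq_succ_pred (i : ℕ) with h | h
    · simp [h]
    · rw [h]; simp_rw [Nat.succ_inj]; exact sum_fin_ite_eq_padded x _
  simp only [mulVec, dotProduct, hM', sum_sub_distrib, ← mul_sum, hprev, sum_fin_ite_eq_padded]

theorem dotProduct_mulVec_of_tridiagonal
    (hM : ∀ i j : Fin d,
      M i j = if i = j then 2 else if |(i : ℤ) - (j : ℤ)| = 1 then -1 else 0)
    (x : Fin d → ℝ) :
    x ⬝ᵥ M *ᵥ x = ∑ m ∈ range (d + 1), (padded x (m + 1) - padded x m) ^ 2 := by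
  rw [sum_range_sq_sub_eq d rfl (by simp [padded]), ← Fin.sum_univ_eq_sum_range
    (fun i => padded x (i + 1) * (2 * padded x (i + 1) - padded x i - padded x (i + 2)))]
  simp only [dotProduct, mulVec_apply_of_tridiagonal hM, padded_succ_val]

theorem dotProduct_mulVec_of_tridiagonal_of_support
    (hM : ∀ i j : Fin d,
      M i j = if i = j then 2 else if |(i : ℤ) - (j : ℤ)| = 1 then -1 else 0)
    {k : ℕ} (hk : k ≤ d) {x : Fin d → ℝ} (hx : ∀ j : Fin d, k ≤ (j : ℕ) → x j = 0) :
    x ⬝ᵥ M *ᵥ x = ∑ m ∈ range (k + 1), (padded x (m + 1) - padded x m) ^ 2 := by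
  rw [dotProduct_mulVec_of_tridiagonal hM]
  refine (sum_subset (range_subset_range.2 (by omega)) fun m _ hm => ?_).symm
  rw [mem_range, not_lt] at hm
  rw [padded_eq_zero_of_lt hx (by omega), padded_eq_zero_of_lt hx (by omega), sub_zero, sq,
    mul_zero]

end Tridiagonal

noncomputable def tridiagonalMinimizer (d k : ℕ) (lam : ℝ) : Fin d → ℝ :=
  fun j => if (j : ℕ) < k then lam * (k - j) / (k + 1) else 0

theorem padded_tridiagonalMinimizer_sub {d k : ℕ} (hk : k ≤ d) (lam : ℝ) {m : ℕ} (hm : m ≤ k) :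
    padded (tridiagonalMinimizer d k lam) (m + 1) - padded (tridiagonalMinimizer d k lam) m =
      lam * ((if m = 0 then 1 else 0) - 1 / (k + 1)) := by
  have hk1 : (k : ℝ) + 1 ≠ 0 := by positivity
  have hval : ∀ j, j ≤ k →
      padded (tridiagonalMinimizer d k lam) (j + 1) = lam * (k - j) / (k + 1) := by
    intro j hj
    rcases hj.lt_or_eq with hj | rfl
    · simp [padded, tridiagonalMinimizer, show j < d by omega, hj]
    · simp only [padded, tridiagonalMinimizer, lt_irrefl, if_false, sub_self, mul_zero, zero_div]
      split_ifs <;> rfl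
  rcases m with _ | m
  · rw [hval 0 (Nat.zero_le _), padded_zero, if_pos rfl]; field_simp; ring
  · rw [hval _ hm, hval _ (by omega), if_neg m.succ_ne_zero]; push_cast; field_simp; ring

theorem stmt_11_general (d n : ℕ) (hd : 0 < d) (L lam : ℝ) (hL : 0 < L)
    (M : Matrix (Fin d) (Fin d) ℝ)
    (hM : ∀ i j : Fin d,
      M i j = if i = j then 2 else if |(i : ℤ) - (j : ℤ)| = 1 then -1 else 0)
    (f : (Fin d → ℝ) → ℝ)
    (hf : ∀ x, f x = L / (4 * n) * (x ⬝ᵥ M.mulVec x - 2 * lam * x ⟨0, hd⟩))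
    (k : ℕ) (hk : k ≤ d) :
    IsLeast (f '' {x | ∀ j : Fin d, k ≤ (j : ℕ) → x j = 0})
      (-(lam ^ 2) * L * k / (4 * n * (k + 1))) := by
  have hf' : ∀ x : Fin d → ℝ, (∀ j : Fin d, k ≤ (j : ℕ) → x j = 0) → f x = L / (4 * n) *
      (∑ m ∈ range (k + 1), (padded x (m + 1) - padded x m
        - lam * ((if m = 0 then 1 else 0) - 1 / (k + 1))) ^ 2 - lam ^ 2 * k / (k + 1)) := by
    intro x hx
    have hsum : ∑ m ∈ range (k + 1), (padded x (m + 1) - padded x m) = 0 := by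
      rw [sum_range_sub, padded_eq_zero_of_lt hx k.lt_succ_self, padded_zero, sub_zero]
    have hx0 : x ⟨0, hd⟩ = padded x (0 + 1) - padded x 0 := by simp [padded, hd]
    rw [hf, dotProduct_mulVec_of_tridiagonal_of_support hM hk hx, hx0,
      sum_sq_sub_two_mul_eq _ _ hsum (mem_range.2 k.succ_pos), card_range]
    push_cast
    ring
  have htarget : -(lam ^ 2) * L * k / (4 * n * (k + 1)) =
      L / (4 * n) * (0 - lam ^ 2 * k / (k + 1)) := by
    rw [zero_sub, mul_neg, div_mul_div_comm]; ring
  have hsupp : ∀ j : Fin d, k ≤ (j : ℕ) → tridiagonalMinimizer d k lam j = 0 :=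
    fun j hj => if_neg (by omega)
  refine ⟨⟨_, hsupp, ?_⟩, ?_⟩
  · rw [hf' _ hsupp, htarget, sum_eq_zero fun m hm => by
      rw [padded_tridiagonalMinimizer_sub hk lam (Nat.lt_succ_iff.1 (mem_range.1 hm)), sub_self,
        sq, mul_zero]]
  · rintro _ ⟨x, hx, rfl⟩
    rw [hf' x hx, htarget]
    gcongr
    positivity

theorem stmt_11 (d n : ℕ) (hd : 0 < d) (hn : 1 ≤ n) (L lam : ℝ) (hL : 0 < L) (hlam : lam ≠ 0)
    (M : Matrix (Fin d) (Fin d) ℝ)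
    (hM : ∀ i j : Fin d,
      M i j = if i = j then 2 else if |(i : ℤ) - (j : ℤ)| = 1 then -1 else 0)
    (f : (Fin d → ℝ) → ℝ)
    (hf : ∀ x, f x = L / (4 * n) * (x ⬝ᵥ M.mulVec x - 2 * lam * x ⟨0, hd⟩))
    (k : ℕ) (hk : k ≤ d) :
    IsLeast (f '' {x | ∀ j : Fin d, k ≤ (j : ℕ) → x j = 0})
      (-(lam ^ 2) * L * k / (4 * n * (k + 1))) :=
  stmt_11_general d n hd L lam hL M hM f hf k hk
end

section
/- Let 0 < θ₁, θ₂, p with θ₁ + θ₂ < 1 and p ≤ 1, and define λ as above. Then 2γβθ₂/θ₁ + (1 − p)·λ ≤ (1 − pθ₁/(p + θ₁ + θ₂))·λ. -/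
theorem stmt_16 (θ₁ θ₂ p γ β : ℝ)
    (h1 : 0 < θ₁) (h2 : 0 < θ₂) (hsum : θ₁ + θ₂ < 1)
    (hp0 : 0 < p) (hp1 : p ≤ 1) (hγ : 0 < γ) (hβ : 0 < β)
    (lam : ℝ)
    (hlam : lam = γ * β / (p * θ₁) *
      (θ₁ + θ₂ - p + Real.sqrt ((p - θ₁ - θ₂) ^ 2 + 4 * p * θ₂))) :
    2 * γ * β * θ₂ / θ₁ + (1 - p) * lam ≤ (1 - p * θ₁ / (p + θ₁ + θ₂)) * lam := by
  set s := Real.sqrt ((p - θ₁ - θ₂) ^ 2 + 4 * p * θ₂) with hs_def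
  have hs0 : 0 ≤ s := Real.sqrt_nonneg _
  have hs2 : s ^ 2 = (p - θ₁ - θ₂) ^ 2 + 4 * p * θ₂ :=
    Real.sq_sqrt (by positivity)
  have hQ : 0 < p + θ₁ + θ₂ := by linarith
  have hst : 0 < θ₁ + θ₂ - p + s := by nlinarith [mul_pos hp0 h2]
  have hQs : (p + θ₁ + θ₂) * s ≤ (θ₁ + θ₂) ^ 2 + p ^ 2 + 2 * p * θ₂ := by
    have hc : 0 ≤ ((θ₁ + θ₂) ^ 2 + p ^ 2 + 2 * p * θ₂) / (p + θ₁ + θ₂) := by positivity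
    have h' : s ≤ ((θ₁ + θ₂) ^ 2 + p ^ 2 + 2 * p * θ₂) / (p + θ₁ + θ₂) := by
      rw [hs_def]
      rw [show ((θ₁ + θ₂) ^ 2 + p ^ 2 + 2 * p * θ₂) / (p + θ₁ + θ₂) =
        Real.sqrt ((((θ₁ + θ₂) ^ 2 + p ^ 2 + 2 * p * θ₂) / (p + θ₁ + θ₂)) ^ 2) from
        (Real.sqrt_sq hc).symm]
      apply Real.sqrt_le_sqrt
      rw [div_pow, le_div_iff₀ (by positivity)]
      nlinarith [sq_nonneg (p * θ₁)]
    calc (p + θ₁ + θ₂) * s ≤ (p + θ₁ + θ₂) *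
          (((θ₁ + θ₂) ^ 2 + p ^ 2 + 2 * p * θ₂) / (p + θ₁ + θ₂)) :=
          mul_le_mul_of_nonneg_left h' hQ.le
      _ = (θ₁ + θ₂) ^ 2 + p ^ 2 + 2 * p * θ₂ := by field_simp
  have key : 2 * θ₂ * (p + θ₁ + θ₂) ≤ (p + θ₂) * (θ₁ + θ₂ - p + s) := by
    nlinarith [hQs, hs2, hst, mul_pos hp0 h2, sq_nonneg s]
  subst hlam
  rw [← sub_nonneg]
  have expand : (1 - p * θ₁ / (p + θ₁ + θ₂)) * (γ * β / (p * θ₁) * (θ₁ + θ₂ - p + s)) -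
      (2 * γ * β * θ₂ / θ₁ + (1 - p) * (γ * β / (p * θ₁) * (θ₁ + θ₂ - p + s))) =
      γ * β / (θ₁ * (p + θ₁ + θ₂)) *
        ((p + θ₂) * (θ₁ + θ₂ - p + s) - 2 * θ₂ * (p + θ₁ + θ₂)) := by
    field_simp
    ring
  rw [expand]
  exact mul_nonneg (by positivity) (by linarith)
end

section
/- Let 0 < θ₁, θ₂ with θ₁ + θ₂ < 1, 0 < p ≤ 1, γ, β > 0, and λ = (γβ/(pθ₁))·(θ₁ + θ₂ − p + √((p − θ₁ − θ₂)² + 4pθ₂)). Then 2γβ(1 − θ₁ − θ₂)/θ₁ + p·λ ≤ (1 − pθ₁/(p + θ₁ + θ₂))·(2γβ/θ₁). -/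
theorem stmt_17 (θ₁ θ₂ p γ β : ℝ)
    (h1 : 0 < θ₁) (h2 : 0 < θ₂) (hsum : θ₁ + θ₂ < 1)
    (hp0 : 0 < p) (hp1 : p ≤ 1) (hγ : 0 < γ) (hβ : 0 < β)
    (lam : ℝ)
    (hlam : lam = γ * β / (p * θ₁) *
      (θ₁ + θ₂ - p + Real.sqrt ((p - θ₁ - θ₂) ^ 2 + 4 * p * θ₂))) :
    2 * γ * β * (1 - θ₁ - θ₂) / θ₁ + p * lam ≤
      (1 - p * θ₁ / (p + θ₁ + θ₂)) * (2 * γ * β / θ₁) := by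
  set s := Real.sqrt ((p - θ₁ - θ₂) ^ 2 + 4 * p * θ₂) with hs
  have hnn : (0:ℝ) ≤ (p - θ₁ - θ₂) ^ 2 + 4 * p * θ₂ := by positivity
  have hs0 : 0 ≤ s := Real.sqrt_nonneg _
  have hs2 : s ^ 2 = (p + θ₁ + θ₂) ^ 2 - 4 * p * θ₁ := by
    rw [hs, Real.sq_sqrt hnn]; ring
  have hD : 0 < p + θ₁ + θ₂ := by linarith
  have hsD : s * (p + θ₁ + θ₂) ≤ (p + θ₁ + θ₂) ^ 2 - 2 * p * θ₁ := by
    nlinarith [sq_nonneg (s - (p + θ₁ + θ₂))]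
  rw [hlam]
  rw [div_add' _ _ _ (ne_of_gt h1)] at *
  have hgb : 0 < γ * β := by positivity
  rw [div_le_iff₀ h1, mul_comm, ← sub_nonneg]
  have key : (1 - p * θ₁ / (p + θ₁ + θ₂)) * (2 * γ * β / θ₁) * θ₁ -
      ((1 - θ₁ - θ₂) * (2 * γ * β) + p * (γ * β / (p * θ₁) * (θ₁ + θ₂ - p + s)) * θ₁)
      = (γ * β / (p + θ₁ + θ₂)) * ((p + θ₁ + θ₂) ^ 2 - 2 * p * θ₁ - s * (p + θ₁ + θ₂)) := by
    field_simp
    ring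
  rw [key]
  apply mul_nonneg (by positivity)
  linarith
end
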